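/- Let x, δ ∈ ℝ^d with δ ≠ 0 and let p ∈ (0,1). Define the half-space H = {z ∈ ℝ^d : ⟨δ, z − x⟩ ≤ σ·‖δ‖₂·Φ⁻¹(p)}, where ⟨·,·⟩ is the Euclidean inner product. Then μ_x(H) = p and μ_{x+δ}(H) = Φ(Φ⁻¹(p) − ‖δ‖₂/σ). Consequently the Gaussian shift lower bound Φ(Φ⁻¹(p) − ‖δ‖₂/σ) for sets of μ_x-measure p is attained, i.e., it is tight. -/

import Mathlib

/-!
Write `μ_y` as the image of the standard Gaussian under `z ↦ y + σ • z`. The standard Gaussian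
pushed forward by `⟪u, ·⟫` for a unit vector `u` is `N(0, 1)`, so with `u = δ / ‖δ‖`
we get `μ_y(H) = Φ(Φ⁻¹(p) - ⟪δ, y - x⟫ / (σ‖δ‖))`: this is `p` for `y = x` and
`Φ(Φ⁻¹(p) - ‖δ‖/σ)` for `y = x + δ`. Finally `Φ (Φ⁻¹ p) = p` on `(0, 1)` because `Φ` is a
continuous CDF, hence attains every value strictly between its limits `0` and `1`.
-/

open MeasureTheory ProbabilityTheory
open scoped RealInnerProductSpace

/-- `Phi` : cumulative distribution function of the standard real Gaussian N(0,1). -/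
noncomputable def Phi : ℝ → ℝ := fun t => ((gaussianReal 0 1) (Set.Iic t)).toReal

/-- `PhiInv` : the standard Gaussian quantile function, inverse of `Phi` on (0,1). -/
noncomputable def PhiInv : ℝ → ℝ := Function.invFun Phi

/-- `gaussPi d σ x` : the isotropic Gaussian measure on ℝ^d with mean `x` and covariance σ²I,
i.e. the product measure whose i-th factor is the real Gaussian with mean `x i`, variance σ². -/
noncomputable def gaussPi (d : ℕ) (σ : ℝ) (x : EuclideanSpace ℝ (Fin d)) :
    Measure (EuclideanSpace ℝ (Fin d)) :=
  (Measure.pi fun i => gaussianReal (x i) ⟨σ ^ 2, sq_nonneg σ⟩).map (MeasurableEquiv.toLp 2 (Fin d → ℝ))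

lemma continuous_cdf (μ : Measure ℝ) [IsProbabilityMeasure μ] [NullSingletonClass μ] :
    Continuous (cdf μ) := by
  refine continuous_iff_continuousAt.2 fun a ↦
    (monotone_cdf μ).continuousAt_iff_leftLim_eq_rightLim.2 ?_
  have hjump : ENNReal.ofReal (cdf μ a - Function.leftLim (cdf μ) a) = 0 := by
    rw [← StieltjesFunction.measure_singleton, measure_cdf, measure_singleton]
  rw [StieltjesFunction.rightLim_eq]
  exact le_antisymm ((monotone_cdf μ).leftLim_le le_rfl) (by simpa [sub_nonpos] using hjump)

lemma Phi_eq_cdf : Phi = cdf (gaussianReal 0 1) := funext fun t ↦ (cdf_eq_real _ t).symm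

lemma Phi_PhiInv {p : ℝ} (hp : p ∈ Set.Ioo (0 : ℝ) 1) : Phi (PhiInv p) = p := by
  have := nullSingletonClass_gaussianReal (μ := 0) one_ne_zero
  rw [PhiInv, Phi_eq_cdf]
  refine Function.invFun_eq
    (mem_range_of_exists_le_of_exists_ge (continuous_cdf (gaussianReal 0 1)) ?_ ?_)
  · exact ((tendsto_cdf_atBot _).eventually_le_const hp.1).exists
  · exact ((tendsto_cdf_atTop _).eventually_const_le hp.2).exists

section stdGaussian

variable {E : Type*} [NormedAddCommGroup E] [InnerProductSpace ℝ E] [FiniteDimensional ℝ E]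
  [MeasurableSpace E] [BorelSpace E]

lemma stdGaussian_map_inner_of_norm_eq_one {u : E} (hu : ‖u‖ = 1) :
    (stdGaussian E).map (fun z ↦ ⟪u, z⟫) = gaussianReal 0 1 := by
  have h := IsGaussian.map_eq_gaussianReal (μ := stdGaussian E) (innerSL ℝ u)
  simp only [integral_strongDual_stdGaussian, variance_dual_stdGaussian, innerSL_apply_norm,
    hu] at h
  simpa using h

lemma stdGaussian_inner_le_of_norm_eq_one {u : E} (hu : ‖u‖ = 1) (t : ℝ) :
    (stdGaussian E {z | ⟪u, z⟫ ≤ t}).toReal = Phi t := by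
  change (stdGaussian E ((fun z ↦ ⟪u, z⟫) ⁻¹' Set.Iic t)).toReal = _
  rw [← Measure.map_apply (by fun_prop) measurableSet_Iic,
    stdGaussian_map_inner_of_norm_eq_one hu]
  rfl

lemma map_stdGaussian_inner_sub_le {σ : ℝ} (hσ : 0 < σ) {δ : E} (hδ : δ ≠ 0) (y x : E) (c : ℝ) :
    ((stdGaussian E).map (fun z ↦ y + σ • z) {z | ⟪δ, z - x⟫ ≤ c}).toReal
      = Phi ((c - ⟪δ, y - x⟫) / (σ * ‖δ‖)) := by
  have hu : ‖‖δ‖⁻¹ • δ‖ = 1 := norm_smul_inv_norm hδ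
  rw [Measure.map_apply (by fun_prop) (measurableSet_le (by fun_prop) (by fun_prop)),
    ← stdGaussian_inner_le_of_norm_eq_one hu]
  congr 2
  ext z
  have : ⟪δ, y + σ • z - x⟫ = ⟪δ, y - x⟫ + σ * ‖δ‖ * ⟪‖δ‖⁻¹ • δ, z⟫ := by
    rw [add_sub_right_comm, inner_add_right, inner_smul_right, real_inner_smul_left]
    field_simp
  simp only [Set.mem_preimage, Set.mem_ofPred_eq, this, le_div_iff₀ (by positivity : 0 < σ * ‖δ‖)]
  constructor <;> intro h <;> linarith

end stdGaussian

lemma gaussianReal_eq_map_affine (m σ : ℝ) :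
    gaussianReal m ⟨σ ^ 2, sq_nonneg σ⟩ = (gaussianReal 0 1).map (fun t ↦ m + σ * t) := by
  rw [show (fun t ↦ m + σ * t) = (m + ·) ∘ (σ * ·) from rfl,
    ← Measure.map_map (by fun_prop) (by fun_prop), gaussianReal_map_const_mul,
    gaussianReal_map_const_add, mul_zero, zero_add, mul_one]
  rfl

lemma gaussPi_eq_map_stdGaussian (d : ℕ) (σ : ℝ) (x : EuclideanSpace ℝ (Fin d)) :
    gaussPi d σ x = (stdGaussian _).map (fun z ↦ x + σ • z) := by
  simp_rw [gaussPi, gaussianReal_eq_map_affine]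
  rw [← Measure.pi_map_pi (fun _ ↦ by fun_prop), ← map_pi_eq_stdGaussian,
    Measure.map_map (by fun_prop) (by fun_prop), Measure.map_map (by fun_prop) (by fun_prop)]
  rfl

/-- Tightness of the Gaussian shift lower bound: the half-space
`H = {z : ⟪δ, z - x⟫ ≤ σ‖δ‖₂Φ⁻¹(p)}` satisfies `μ_x(H) = p` and
`μ_{x+δ}(H) = Φ(Φ⁻¹(p) - ‖δ‖₂/σ)`, so the bound is attained. -/
theorem gaussian_shift_halfspace_tight
    {d : ℕ} {σ : ℝ} (hσ : 0 < σ)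
    (x δ : EuclideanSpace ℝ (Fin d)) (hδ : δ ≠ 0)
    (p : ℝ) (hp : p ∈ Set.Ioo (0 : ℝ) 1) :
    (gaussPi d σ x {z | ⟪δ, z - x⟫ ≤ σ * ‖δ‖ * PhiInv p}).toReal = p ∧
    (gaussPi d σ (x + δ) {z | ⟪δ, z - x⟫ ≤ σ * ‖δ‖ * PhiInv p}).toReal
      = Phi (PhiInv p - ‖δ‖ / σ) := by
  have hσδ : σ * ‖δ‖ ≠ 0 := by positivity
  simp only [gaussPi_eq_map_stdGaussian, map_stdGaussian_inner_sub_le hσ hδ, sub_self,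
    inner_zero_right, add_sub_cancel_left, real_inner_self_eq_norm_sq]
  refine ⟨by rw [sub_zero, mul_div_cancel_left₀ _ hσδ, Phi_PhiInv hp], ?_⟩
  congr 1
  field_simp
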